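/- arXiv:2303.13330 — 4 statements merged into one kernel-verified Lean document; each statement's English description precedes it below -/
import Mathlib

section
/- (Proposition 1: descriptive equivalence implies individual predictive equivalence.) Let β^A, β^B ∈ ℝ^p, let S be a p×p real symmetric positive definite matrix with largest eigenvalue λ₁, and suppose the descriptive-equivalence bound (β^A − β^B)ᵀ S⁻¹ (β^A − β^B) < ε_β² holds for some ε_β > 0. Let X be a random vector in ℝ^p with finite second moments, mean vector μ and covariance matrix Σ. Then the expected absolute difference of the linear predictors satisfies E[|Xᵀβ^A − Xᵀβ^B|] ≤ ε_β · √λ₁ · √(μᵀμ + tr(Σ)). -/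
/-!
With `q = β^A - β^B`, Cauchy–Schwarz gives `|Xᵀq| ≤ ‖X‖ ‖q‖`. Every eigenvalue of `S⁻¹` is at
least `λ₁⁻¹`, so `‖q‖² ≤ λ₁ qᵀS⁻¹q < λ₁ ε_β²`. Finally `E|Xᵀq| ≤ √E[(Xᵀq)²] ≤ ‖q‖ √E‖X‖²`, and
the second moment `E‖X‖²` is `μᵀμ + tr Σ`.
-/

open Matrix MeasureTheory

open scoped MatrixOrder in
theorem Matrix.PosDef.inv_mul_dotProduct_self_le {n : Type*} [Fintype n] [DecidableEq n]
    {S : Matrix n n ℝ} (hS : S.PosDef) {c : ℝ} (hc : ∀ i, hS.1.eigenvalues i ≤ c) (x : n → ℝ) :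
    c⁻¹ * (x ⬝ᵥ x) ≤ x ⬝ᵥ S⁻¹ *ᵥ x := by
  have hle : algebraMap ℝ (Matrix n n ℝ) c⁻¹ ≤ S⁻¹ := by
    rw [nonsing_inv_eq_ringInverse, ← cfc_ringInverse_id (R := ℝ) (a := S) hS.isUnit hS.isHermitian]
    refine algebraMap_le_cfc _ _ _ ?_ (S.finite_real_spectrum.continuousOn _) hS.isHermitian
    intro t ht
    obtain ⟨i, rfl⟩ := hS.isHermitian.spectrum_real_eq_range_eigenvalues ▸ ht
    exact inv_anti₀ (hS.eigenvalues_pos i) (hc i)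
  simpa [sub_mulVec, dotProduct_sub, Algebra.algebraMap_eq_smul_one, smul_mulVec, dotProduct_smul]
    using (Matrix.le_iff.mp hle).dotProduct_mulVec_nonneg x

theorem sq_dotProduct_le_dotProduct_self_mul {n : Type*} [Fintype n] (u v : n → ℝ) :
    (u ⬝ᵥ v) ^ 2 ≤ (u ⬝ᵥ u) * (v ⬝ᵥ v) := by
  simpa [dotProduct, sq] using Finset.sum_mul_sq_le_sq_mul_sq Finset.univ u v

section Moments

variable {Ω : Type*} [MeasurableSpace Ω] {P : Measure Ω}

theorem integrable_dotProduct_self {ι : Type*} [Fintype ι] {X : Ω → ι → ℝ}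
    (hX : ∀ i, MemLp (fun ω => X ω i) 2 P) : Integrable (fun ω => X ω ⬝ᵥ X ω) P := by
  have hint : ∀ i, Integrable (fun ω => X ω i * X ω i) P := fun i => (hX i).integrable_mul (hX i)
  simpa only [dotProduct] using integrable_finsetSum Finset.univ fun i _ => hint i

variable [IsProbabilityMeasure P]

theorem integral_le_sqrt_integral_sq {f : Ω → ℝ} (hf : MemLp f 2 P) :
    ∫ ω, f ω ∂P ≤ √(∫ ω, f ω ^ 2 ∂P) := by
  have hvar := ProbabilityTheory.variance_nonneg f P
  rw [ProbabilityTheory.variance_eq_sub hf] at hvar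
  exact (le_abs_self _).trans (Real.abs_le_sqrt (by simpa using hvar))

theorem integral_dotProduct_self_eq {ι : Type*} [Fintype ι] {X : Ω → ι → ℝ}
    (hX : ∀ i, MemLp (fun ω => X ω i) 2 P) {μ : ι → ℝ} (hμ : ∀ i, μ i = ∫ ω, X ω i ∂P)
    {Cov : Matrix ι ι ℝ} (hCov : ∀ i, Cov i i = ∫ ω, (X ω i - μ i) * (X ω i - μ i) ∂P) :
    ∫ ω, X ω ⬝ᵥ X ω ∂P = μ ⬝ᵥ μ + Cov.trace := by
  have hmoment : ∀ i, ∫ ω, X ω i * X ω i ∂P = μ i * μ i + Cov i i := by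
    intro i
    have h := ProbabilityTheory.variance_eq_sub (hX i)
    rw [ProbabilityTheory.variance_eq_integral (hX i).aemeasurable] at h
    simp only [hCov, hμ, ← sq]
    simp only [Pi.pow_apply] at h
    linarith
  have hint : ∀ i, Integrable (fun ω => X ω i * X ω i) P := fun i => (hX i).integrable_mul (hX i)
  simp only [dotProduct]
  rw [integral_finsetSum _ fun i _ => hint i]
  simp [hmoment, Finset.sum_add_distrib, trace]

end Moments

/-- **Proposition 1.** Descriptive equivalence implies individual predictive
equivalence: if the coefficient difference `q = β^A − β^B` satisfies the Mahalanobis bound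
`qᵀ S⁻¹ q < ε_β²` for a symmetric positive definite matrix `S` with largest eigenvalue `λ₁`,
then for a random test vector `X` with mean `μ` and covariance `Σ`, the expected absolute
difference of the linear predictors is at most `ε_β · √λ₁ · √(μᵀμ + tr(Σ))`. -/
theorem descriptive_equiv_implies_individual_predictive_equiv
    {p : ℕ} (βA βB : Fin p → ℝ)
    (S : Matrix (Fin p) (Fin p) ℝ) (hS : S.PosDef) (lam1 : ℝ)
    (hlam : IsGreatest (Set.range hS.1.eigenvalues) lam1)
    (εβ : ℝ) (hεβ : 0 < εβ)
    (hDE : (βA - βB) ⬝ᵥ S⁻¹ *ᵥ (βA - βB) < εβ ^ 2)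
    {Ω : Type*} [MeasurableSpace Ω] (P : Measure Ω) [IsProbabilityMeasure P]
    (X : Ω → Fin p → ℝ)
    (hX : ∀ i, MemLp (fun ω => X ω i) 2 P)
    (μ : Fin p → ℝ) (hμ : ∀ i, μ i = ∫ ω, X ω i ∂P)
    (Cov : Matrix (Fin p) (Fin p) ℝ)
    (hCov : ∀ i j, Cov i j = ∫ ω, (X ω i - μ i) * (X ω j - μ j) ∂P) :
    ∫ ω, |X ω ⬝ᵥ βA - X ω ⬝ᵥ βB| ∂P ≤
      εβ * Real.sqrt lam1 * Real.sqrt (μ ⬝ᵥ μ + Cov.trace) := by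
  set q := βA - βB
  obtain ⟨⟨i₀, rfl⟩, hmax⟩ := hlam
  have hlam_pos := hS.eigenvalues_pos i₀
  have hq : q ⬝ᵥ q ≤ hS.1.eigenvalues i₀ * εβ ^ 2 := by
    have h := hS.inv_mul_dotProduct_self_le (fun i => hmax ⟨i, rfl⟩) q
    rw [inv_mul_le_iff₀ hlam_pos] at h
    exact h.trans (mul_le_mul_of_nonneg_left hDE.le hlam_pos.le)
  have hXq : MemLp (fun ω => X ω ⬝ᵥ q) 2 P := by
    simpa [dotProduct] using memLp_finsetSum Finset.univ fun i _ => (hX i).mul_const (q i)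
  have hmoment := integral_dotProduct_self_eq hX hμ fun i => hCov i i
  have hmoment_nonneg : 0 ≤ μ ⬝ᵥ μ + Cov.trace :=
    hmoment ▸ integral_nonneg fun ω => dotProduct_self_star_nonneg (X ω)
  calc ∫ ω, |X ω ⬝ᵥ βA - X ω ⬝ᵥ βB| ∂P = ∫ ω, |X ω ⬝ᵥ q| ∂P := by simp [q, dotProduct_sub]
    _ ≤ √(∫ ω, |X ω ⬝ᵥ q| ^ 2 ∂P) := integral_le_sqrt_integral_sq hXq.abs
    _ ≤ √(∫ ω, (X ω ⬝ᵥ X ω) * (q ⬝ᵥ q) ∂P) := by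
        refine Real.sqrt_le_sqrt (integral_mono hXq.abs.integrable_sq
          ((integrable_dotProduct_self hX).mul_const _) fun ω => ?_)
        simpa using sq_dotProduct_le_dotProduct_self_mul (X ω) q
    _ = √((μ ⬝ᵥ μ + Cov.trace) * (q ⬝ᵥ q)) := by rw [integral_mul_const, hmoment]
    _ ≤ √((μ ⬝ᵥ μ + Cov.trace) * (hS.1.eigenvalues i₀ * εβ ^ 2)) := by gcongr
    _ = εβ * √(hS.1.eigenvalues i₀) * √(μ ⬝ᵥ μ + Cov.trace) := by
        rw [Real.sqrt_mul hmoment_nonneg, Real.sqrt_mul hlam_pos.le, Real.sqrt_sq hεβ.le]; ring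
end

section
/- Let a, b ∈ (0,1), let y ∈ {0,1}, and let ε ≥ 0 with |logit(a) − logit(b)| ≤ ε. Then the squared prediction errors satisfy exp(−2ε) · (y − b)² ≤ (y − a)² ≤ exp(2ε) · (y − b)². -/
/-- The logit function on `(0,1)`: `logit t = log (t / (1 - t))`. -/
noncomputable def logit (t : ℝ) : ℝ := Real.log (t / (1 - t))

lemma logit_eq {t : ℝ} (ht : t ∈ Set.Ioo (0:ℝ) 1) :
    logit t = Real.log t - Real.log (1 - t) := by
  unfold logit
  exact Real.log_div (ne_of_gt ht.1) (by linarith [ht.2])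

lemma abs_log_sub_le_abs_logit_sub {a b : ℝ} (ha : a ∈ Set.Ioo (0:ℝ) 1)
    (hb : b ∈ Set.Ioo (0:ℝ) 1) :
    |Real.log a - Real.log b| ≤ |logit a - logit b| ∧
    |Real.log (1 - a) - Real.log (1 - b)| ≤ |logit a - logit b| := by
  rw [logit_eq ha, logit_eq hb]
  have hna := neg_abs_le (Real.log a - Real.log (1 - a) - (Real.log b - Real.log (1 - b)))
  have hpa := le_abs_self (Real.log a - Real.log (1 - a) - (Real.log b - Real.log (1 - b)))
  rcases le_total a b with hab | hab
  · have h1 : Real.log a ≤ Real.log b := Real.log_le_log ha.1 hab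
    have h2 : Real.log (1 - b) ≤ Real.log (1 - a) :=
      Real.log_le_log (by linarith [hb.2]) (by linarith)
    constructor <;> rw [abs_le] <;> constructor <;> linarith
  · have h1 : Real.log b ≤ Real.log a := Real.log_le_log hb.1 hab
    have h2 : Real.log (1 - a) ≤ Real.log (1 - b) :=
      Real.log_le_log (by linarith [ha.2]) (by linarith)
    constructor <;> rw [abs_le] <;> constructor <;> linarith

lemma sq_bounds {x z ε : ℝ} (hx : 0 < x) (hz : 0 < z)
    (h : |Real.log x - Real.log z| ≤ ε) :
    Real.exp (-2 * ε) * z ^ 2 ≤ x ^ 2 ∧ x ^ 2 ≤ Real.exp (2 * ε) * z ^ 2 := by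
  rw [abs_le] at h
  have e1 : Real.exp (Real.log x - Real.log z) = x / z := by
    rw [Real.exp_sub, Real.exp_log hx, Real.exp_log hz]
  have hub : x ≤ Real.exp ε * z := by
    have := Real.exp_le_exp.2 h.2
    rw [e1, div_le_iff₀ hz] at this; linarith
  have hlb : Real.exp (-ε) * z ≤ x := by
    have := Real.exp_le_exp.2 h.1
    rw [e1, le_div_iff₀ hz] at this; linarith
  constructor
  · have := mul_le_mul hlb hlb (by positivity) hx.le
    calc Real.exp (-2 * ε) * z ^ 2 = (Real.exp (-ε) * z) * (Real.exp (-ε) * z) := by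
          rw [show (-2*ε) = (-ε) + (-ε) by ring, Real.exp_add]; ring
      _ ≤ x * x := this
      _ = x ^ 2 := by ring
  · have hub' := mul_le_mul hub hub hx.le (by positivity)
    calc x ^ 2 = x * x := by ring
      _ ≤ (Real.exp ε * z) * (Real.exp ε * z) := hub'
      _ = Real.exp (2 * ε) * z ^ 2 := by
          rw [show (2*ε) = ε + ε by ring, Real.exp_add]; ring

/-- If `a, b ∈ (0,1)` are predicted probabilities for a binary outcome
`y ∈ {0,1}` and `|logit a − logit b| ≤ ε` for some `ε ≥ 0`, then the squared prediction errors
satisfy `exp(−2ε)·(y−b)² ≤ (y−a)² ≤ exp(2ε)·(y−b)²`. -/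
theorem sq_error_bounds_of_abs_logit_sub_le
    {a b ε : ℝ} (ha : a ∈ Set.Ioo (0 : ℝ) 1) (hb : b ∈ Set.Ioo (0 : ℝ) 1)
    {y : ℝ} (hy : y = 0 ∨ y = 1)
    (hε : 0 ≤ ε) (h : |logit a - logit b| ≤ ε) :
    Real.exp (-2 * ε) * (y - b) ^ 2 ≤ (y - a) ^ 2 ∧
      (y - a) ^ 2 ≤ Real.exp (2 * ε) * (y - b) ^ 2 := by
  obtain ⟨h1, h2⟩ := abs_log_sub_le_abs_logit_sub ha hb
  rcases hy with rfl | rfl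
  · have := sq_bounds ha.1 hb.1 (h1.trans h)
    constructor
    · calc Real.exp (-2 * ε) * (0 - b) ^ 2 = Real.exp (-2 * ε) * b ^ 2 := by ring
        _ ≤ a ^ 2 := this.1
        _ = (0 - a) ^ 2 := by ring
    · calc (0 - a) ^ 2 = a ^ 2 := by ring
        _ ≤ Real.exp (2 * ε) * b ^ 2 := this.2
        _ = Real.exp (2 * ε) * (0 - b) ^ 2 := by ring
  · have := sq_bounds (by linarith [ha.2] : (0:ℝ) < 1 - a)
      (by linarith [hb.2] : (0:ℝ) < 1 - b) (h2.trans h)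
    constructor
    · calc Real.exp (-2 * ε) * (1 - b) ^ 2 ≤ (1 - a) ^ 2 := this.1
        _ = (1 - a) ^ 2 := by ring
    · exact this.2
end

section
/- (Proposition 2, expectation form.) Let Y be a {0,1}-valued random variable and let π^A, π^B be (0,1)-valued random variables on the same probability space such that the squared errors (Y − π^A)² and (Y − π^B)² are integrable, and let ε_θ ≥ 0. Suppose |logit(π^A) − logit(π^B)| ≤ ε_θ holds almost surely. Then exp(−2ε_θ) · E[(Y − π^B)²] ≤ E[(Y − π^A)²] ≤ exp(2ε_θ) · E[(Y − π^B)²]. -/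
open MeasureTheory

lemma ratio_le_of_logit {a b ε : ℝ} (ha : a ∈ Set.Ioo (0:ℝ) 1) (hb : b ∈ Set.Ioo (0:ℝ) 1)
    (hε : 0 ≤ ε) (h : logit a - logit b ≤ ε) : a ≤ Real.exp ε * b := by
  obtain ⟨ha0, ha1⟩ := ha
  obtain ⟨hb0, hb1⟩ := hb
  have h1a : (0:ℝ) < 1 - a := by linarith
  have h1b : (0:ℝ) < 1 - b := by linarith
  have key : a / (1 - a) ≤ Real.exp ε * (b / (1 - b)) := by
    have h2 : Real.exp (logit a) ≤ Real.exp (ε + logit b) := Real.exp_le_exp.2 (by linarith)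
    rwa [logit, logit, Real.exp_add, Real.exp_log (by positivity), Real.exp_log (by positivity)]
      at h2
  have key2 : a * (1 - b) ≤ Real.exp ε * b * (1 - a) := by
    rw [div_le_iff₀ h1a] at key
    have h3 := mul_le_mul_of_nonneg_right key h1b.le
    have h4 : Real.exp ε * (b / (1 - b)) * (1 - a) * (1 - b) = Real.exp ε * b * (1 - a) := by
      field_simp
    linarith
  have hE : (1:ℝ) ≤ Real.exp ε := Real.one_le_exp hε
  nlinarith [mul_nonneg ha0.le hb0.le]

lemma logit_one_sub {t : ℝ} (_ : t ∈ Set.Ioo (0:ℝ) 1) : logit (1 - t) = - logit t := by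
  unfold logit
  rw [show (1 : ℝ) - (1 - t) = t by ring, ← Real.log_inv, inv_div]

lemma sq_le_of_logit {y a b ε : ℝ} (hy : y = 0 ∨ y = 1) (ha : a ∈ Set.Ioo (0:ℝ) 1)
    (hb : b ∈ Set.Ioo (0:ℝ) 1) (hε : 0 ≤ ε) (h : |logit a - logit b| ≤ ε) :
    (y - a) ^ 2 ≤ Real.exp (2 * ε) * (y - b) ^ 2 := by
  have h1 : a ≤ Real.exp ε * b := ratio_le_of_logit ha hb hε (abs_le.1 h).2
  have h2 : 1 - a ≤ Real.exp ε * (1 - b) := by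
    apply ratio_le_of_logit ⟨by linarith [ha.2], by linarith [ha.1]⟩
      ⟨by linarith [hb.2], by linarith [hb.1]⟩ hε
    rw [logit_one_sub ha, logit_one_sub hb]
    linarith [(abs_le.1 h).1]
  have hexp : Real.exp (2 * ε) = Real.exp ε * Real.exp ε := by
    rw [← Real.exp_add]; ring_nf
  rcases hy with rfl | rfl
  · have := mul_self_le_mul_self ha.1.le h1
    nlinarith [hb.1.le]
  · have h1a : (0:ℝ) ≤ 1 - a := by linarith [ha.2]
    have := mul_self_le_mul_self h1a h2
    nlinarith [hb.2]

/-- **Proposition 2, expectation form.** If `Y` is a `{0,1}`-valued random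
variable, `π^A, π^B` are `(0,1)`-valued random variables with integrable squared errors, and
`|logit π^A − logit π^B| ≤ ε_θ` almost surely, then
`exp(−2ε_θ)·E[(Y − π^B)²] ≤ E[(Y − π^A)²] ≤ exp(2ε_θ)·E[(Y − π^B)²]`. -/
theorem expected_sq_error_bounds_of_ae_logit_close
    {Ω : Type*} [MeasurableSpace Ω] (P : Measure Ω) [IsProbabilityMeasure P]
    (Y πA πB : Ω → ℝ)
    (hY : ∀ ω, Y ω = 0 ∨ Y ω = 1)
    (hπA : ∀ ω, πA ω ∈ Set.Ioo (0 : ℝ) 1) (hπB : ∀ ω, πB ω ∈ Set.Ioo (0 : ℝ) 1)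
    (hIntA : Integrable (fun ω => (Y ω - πA ω) ^ 2) P)
    (hIntB : Integrable (fun ω => (Y ω - πB ω) ^ 2) P)
    (εθ : ℝ) (hεθ : 0 ≤ εθ)
    (h : ∀ᵐ ω ∂P, |logit (πA ω) - logit (πB ω)| ≤ εθ) :
    Real.exp (-2 * εθ) * ∫ ω, (Y ω - πB ω) ^ 2 ∂P ≤ ∫ ω, (Y ω - πA ω) ^ 2 ∂P ∧
      ∫ ω, (Y ω - πA ω) ^ 2 ∂P ≤ Real.exp (2 * εθ) * ∫ ω, (Y ω - πB ω) ^ 2 ∂P := by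
  have hup : ∫ ω, (Y ω - πA ω) ^ 2 ∂P ≤ Real.exp (2 * εθ) * ∫ ω, (Y ω - πB ω) ^ 2 ∂P := by
    rw [← integral_const_mul]
    apply integral_mono_ae hIntA (hIntB.const_mul _)
    filter_upwards [h] with ω hω
    exact sq_le_of_logit (hY ω) (hπA ω) (hπB ω) hεθ hω
  have hlow : ∫ ω, (Y ω - πB ω) ^ 2 ∂P ≤ Real.exp (2 * εθ) * ∫ ω, (Y ω - πA ω) ^ 2 ∂P := by
    rw [← integral_const_mul]
    apply integral_mono_ae hIntB (hIntA.const_mul _)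
    filter_upwards [h] with ω hω
    exact sq_le_of_logit (hY ω) (hπB ω) (hπA ω) hεθ (by rwa [abs_sub_comm])
  refine ⟨?_, hup⟩
  have := mul_le_mul_of_nonneg_left hlow (Real.exp_nonneg (-2 * εθ))
  calc Real.exp (-2 * εθ) * ∫ ω, (Y ω - πB ω) ^ 2 ∂P
      ≤ Real.exp (-2 * εθ) * (Real.exp (2 * εθ) * ∫ ω, (Y ω - πA ω) ^ 2 ∂P) := this
    _ = ∫ ω, (Y ω - πA ω) ^ 2 ∂P := by
        rw [← mul_assoc, ← Real.exp_add, show (-2*εθ + 2*εθ) = 0 by ring, Real.exp_zero, one_mul]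
end

section
/- (Cascade: descriptive equivalence implies performance equivalence.) Let β^A, β^B ∈ ℝ^p, let S be a p×p real symmetric positive definite matrix with largest eigenvalue λ₁, and suppose (β^A − β^B)ᵀ S⁻¹ (β^A − β^B) < ε_β² for some ε_β > 0. Let x_1,…,x_m ∈ ℝ^p be test covariate vectors with ‖x_i‖ ≤ R for all i, let y_1,…,y_m ∈ {0,1}, and define π_i^K = exp(x_iᵀβ^K)/(1 + exp(x_iᵀβ^K)) for K ∈ {A,B}. Set ε_θ = ε_β · √λ₁ · R. Then the Brier scores BS^A = (1/m) Σ_{i=1}^m (y_i − π_i^A)² and BS^B = (1/m) Σ_{i=1}^m (y_i − π_i^B)² satisfy exp(−2ε_θ) · BS^B ≤ BS^A ≤ exp(2ε_θ) · BS^B. -/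
open Matrix

/-- Rayleigh-type bound: `‖d‖² ≤ λ₁ · dᵀ S⁻¹ d` for `S` posdef with max eigenvalue `λ₁`. -/
lemma quad_inv_lower {p : ℕ} {S : Matrix (Fin p) (Fin p) ℝ} (hS : S.PosDef) {lam1 : ℝ}
    (hlam : IsGreatest (Set.range hS.1.eigenvalues) lam1) (d : Fin p → ℝ) :
    d ⬝ᵥ d ≤ lam1 * (d ⬝ᵥ S⁻¹ *ᵥ d) := by
  classical
  set U : Matrix (Fin p) (Fin p) ℝ := (hS.1.eigenvectorUnitary : Matrix (Fin p) (Fin p) ℝ) with hUdef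
  set ev : Fin p → ℝ := hS.1.eigenvalues with hev
  have hUu : U * star U = 1 := (Matrix.mem_unitaryGroup_iff).mp hS.1.eigenvectorUnitary.2
  have huU : star U * U = 1 := (Matrix.mem_unitaryGroup_iff').mp hS.1.eigenvectorUnitary.2
  have hevpos : ∀ i, 0 < ev i := fun i => hS.eigenvalues_pos i
  have hevle : ∀ i, ev i ≤ lam1 := fun i => hlam.2 ⟨i, rfl⟩
  have hspec : S = U * diagonal ev * star U := by
    have := hS.1.spectral_theorem
    simpa [RCLike.ofReal_real_eq_id] using this
  have hinv : S⁻¹ = U * diagonal (fun i => (ev i)⁻¹) * star U := by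
    apply inv_eq_right_inv
    rw [hspec]
    calc (U * diagonal ev * star U) * (U * diagonal (fun i => (ev i)⁻¹) * star U)
        = U * diagonal ev * (star U * U) * diagonal (fun i => (ev i)⁻¹) * star U := by
          noncomm_ring
      _ = U * (diagonal ev * diagonal (fun i => (ev i)⁻¹)) * star U := by
          rw [huU]; noncomm_ring
      _ = 1 := by
          rw [diagonal_mul_diagonal]
          have : (fun i => ev i * (ev i)⁻¹) = fun _ : Fin p => (1 : ℝ) := by
            funext i; exact mul_inv_cancel₀ (hevpos i).ne'
          rw [this, diagonal_one, mul_one, hUu]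
  have hPSD : (lam1 • S⁻¹ - 1).PosSemidef := by
    have h1 : lam1 • S⁻¹ - 1
        = U * diagonal (fun i => lam1 * (ev i)⁻¹ - 1) * star U := by
      have hd : diagonal (fun i => lam1 * (ev i)⁻¹ - 1)
          = lam1 • diagonal (fun i => (ev i)⁻¹) - 1 := by
        rw [← diagonal_one, ← diagonal_smul, ← diagonal_sub]
        congr 1
      rw [hinv, hd, mul_sub, sub_mul, mul_one, hUu, Matrix.mul_smul, Matrix.smul_mul]
    rw [h1]
    refine PosSemidef.mul_mul_conjTranspose_same ?_ U
    refine posSemidef_diagonal_iff.mpr fun i => ?_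
    have : (1 : ℝ) ≤ lam1 * (ev i)⁻¹ := by
      rw [← div_eq_mul_inv, le_div_iff₀ (hevpos i)]
      simpa using hevle i
    linarith
  have := hPSD.dotProduct_mulVec_nonneg d
  have hre : (0 : ℝ) ≤ d ⬝ᵥ (lam1 • S⁻¹ - 1) *ᵥ d := by simpa using this
  have hexp : d ⬝ᵥ (lam1 • S⁻¹ - 1) *ᵥ d
      = lam1 * (d ⬝ᵥ S⁻¹ *ᵥ d) - d ⬝ᵥ d := by
    rw [Matrix.sub_mulVec, Matrix.smul_mulVec, Matrix.one_mulVec, dotProduct_sub,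
      dotProduct_smul]
    simp [smul_eq_mul]
  linarith [hexp ▸ hre]

/-- Pointwise Brier-term comparison for logistic predictions with close linear predictors. -/
lemma brier_term_le {θ1 θ2 ε y : ℝ} (hθ : |θ1 - θ2| ≤ ε) (hy : y = 0 ∨ y = 1) :
    (y - Real.exp θ1 / (1 + Real.exp θ1)) ^ 2
      ≤ Real.exp (2 * ε) * (y - Real.exp θ2 / (1 + Real.exp θ2)) ^ 2 := by
  have hε : 0 ≤ ε := le_trans (abs_nonneg _) hθ
  have hE : 1 ≤ Real.exp ε := by simpa using Real.exp_le_exp.mpr hε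
  have ha : 0 < Real.exp θ1 := Real.exp_pos _
  have hb : 0 < Real.exp θ2 := Real.exp_pos _
  have h1 : (0:ℝ) < 1 + Real.exp θ1 := by linarith
  have h2 : (0:ℝ) < 1 + Real.exp θ2 := by linarith
  have h12 : Real.exp θ1 ≤ Real.exp ε * Real.exp θ2 := by
    rw [← Real.exp_add]
    exact Real.exp_le_exp.mpr (by cases abs_le.mp hθ with | intro l r => linarith)
  have h21 : Real.exp θ2 ≤ Real.exp ε * Real.exp θ1 := by
    rw [← Real.exp_add]
    exact Real.exp_le_exp.mpr (by cases abs_le.mp hθ with | intro l r => linarith)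
  have h2ε : Real.exp (2 * ε) = Real.exp ε ^ 2 := by
    rw [← Real.exp_nat_mul]; norm_num [mul_comm]
  rw [h2ε]
  rcases hy with rfl | rfl
  · -- y = 0 : need (π1)² ≤ (e^ε π2)²
    have key : Real.exp θ1 / (1 + Real.exp θ1)
        ≤ Real.exp ε * (Real.exp θ2 / (1 + Real.exp θ2)) := by
      rw [mul_div_assoc' , div_le_div_iff₀ h1 h2]
      nlinarith
    calc (0 - Real.exp θ1 / (1 + Real.exp θ1)) ^ 2
        = (Real.exp θ1 / (1 + Real.exp θ1)) ^ 2 := by ring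
      _ ≤ (Real.exp ε * (Real.exp θ2 / (1 + Real.exp θ2))) ^ 2 := by
          apply pow_le_pow_left₀ (by positivity) key
      _ = Real.exp ε ^ 2 * (0 - Real.exp θ2 / (1 + Real.exp θ2)) ^ 2 := by ring
  · -- y = 1 : need (1-π1)² ≤ (e^ε (1-π2))²
    have e1 : 1 - Real.exp θ1 / (1 + Real.exp θ1) = 1 / (1 + Real.exp θ1) := by
      field_simp
      ring
    have e2 : 1 - Real.exp θ2 / (1 + Real.exp θ2) = 1 / (1 + Real.exp θ2) := by
      field_simp
      ring
    have key : 1 / (1 + Real.exp θ1) ≤ Real.exp ε * (1 / (1 + Real.exp θ2)) := by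
      rw [mul_div_assoc', div_le_div_iff₀ h1 h2]
      nlinarith
    calc (1 - Real.exp θ1 / (1 + Real.exp θ1)) ^ 2
        = (1 / (1 + Real.exp θ1)) ^ 2 := by rw [e1]
      _ ≤ (Real.exp ε * (1 / (1 + Real.exp θ2))) ^ 2 := by
          apply pow_le_pow_left₀ (by positivity) key
      _ = Real.exp ε ^ 2 * (1 - Real.exp θ2 / (1 + Real.exp θ2)) ^ 2 := by rw [e2]; ring

/-- **Cascade.** Descriptive equivalence implies performance equivalence:
if `(β^A − β^B)ᵀ S⁻¹ (β^A − β^B) < ε_β²` for a symmetric positive definite `S` with largest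
eigenvalue `λ₁`, and the test covariate vectors satisfy `‖x_i‖ ≤ R`, then with
`ε_θ = ε_β·√λ₁·R` the Brier scores of the two logistic models satisfy
`exp(−2ε_θ)·BS^B ≤ BS^A ≤ exp(2ε_θ)·BS^B`. -/
theorem descriptive_equiv_implies_performance_equiv
    {p : ℕ} (βA βB : Fin p → ℝ)
    (S : Matrix (Fin p) (Fin p) ℝ) (hS : S.PosDef) (lam1 : ℝ)
    (hlam : IsGreatest (Set.range hS.1.eigenvalues) lam1)
    (εβ : ℝ) (hεβ : 0 < εβ)
    (hDE : (βA - βB) ⬝ᵥ S⁻¹ *ᵥ (βA - βB) < εβ ^ 2)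
    {m : ℕ} (hm : 1 ≤ m) (x : Fin m → Fin p → ℝ) (R : ℝ)
    (hR : ∀ i, Real.sqrt (∑ j, (x i j) ^ 2) ≤ R)
    (y : Fin m → ℝ) (hy : ∀ i, y i = 0 ∨ y i = 1)
    (πA πB : Fin m → ℝ)
    (hπA : ∀ i, πA i = Real.exp (x i ⬝ᵥ βA) / (1 + Real.exp (x i ⬝ᵥ βA)))
    (hπB : ∀ i, πB i = Real.exp (x i ⬝ᵥ βB) / (1 + Real.exp (x i ⬝ᵥ βB)))
    (εθ : ℝ) (hεθ : εθ = εβ * Real.sqrt lam1 * R) :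
    Real.exp (-2 * εθ) * ((1 / (m : ℝ)) * ∑ i, (y i - πB i) ^ 2) ≤
        (1 / (m : ℝ)) * ∑ i, (y i - πA i) ^ 2 ∧
      (1 / (m : ℝ)) * ∑ i, (y i - πA i) ^ 2 ≤
        Real.exp (2 * εθ) * ((1 / (m : ℝ)) * ∑ i, (y i - πB i) ^ 2) := by
  set d : Fin p → ℝ := βA - βB with hd
  have hlam1pos : 0 < lam1 := by
    obtain ⟨i, hi⟩ := hlam.1
    exact hi ▸ hS.eigenvalues_pos i
  have hdd : d ⬝ᵥ d < lam1 * εβ ^ 2 :=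
    lt_of_le_of_lt (quad_inv_lower hS hlam d) (by nlinarith)
  have hR0 : 0 ≤ R := le_trans (Real.sqrt_nonneg _) (hR ⟨0, hm⟩)
  have hεθ0 : 0 ≤ εθ := by
    rw [hεθ]; positivity
  have hθ : ∀ i, |x i ⬝ᵥ βA - x i ⬝ᵥ βB| ≤ εθ := by
    intro i
    have hsub : x i ⬝ᵥ βA - x i ⬝ᵥ βB = x i ⬝ᵥ d := by
      rw [hd]; simp [dotProduct, Finset.sum_sub_distrib, mul_sub]
    have hcs : (x i ⬝ᵥ d) ^ 2 ≤ (∑ j, (x i j) ^ 2) * (∑ j, (d j) ^ 2) :=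
      Finset.sum_mul_sq_le_sq_mul_sq Finset.univ (x i) d
    have hx2 : (∑ j, (x i j) ^ 2) ≤ R ^ 2 := by
      have h0 : 0 ≤ ∑ j, (x i j) ^ 2 := by positivity
      calc (∑ j, (x i j) ^ 2) = Real.sqrt (∑ j, (x i j) ^ 2) ^ 2 := (Real.sq_sqrt h0).symm
        _ ≤ R ^ 2 := by apply pow_le_pow_left₀ (Real.sqrt_nonneg _) (hR i)
    have hd2 : (∑ j, (d j) ^ 2) ≤ lam1 * εβ ^ 2 := by
      have : d ⬝ᵥ d = ∑ j, (d j) ^ 2 := by simp [dotProduct, pow_two]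
      linarith [this ▸ hdd]
    have hsq : (x i ⬝ᵥ d) ^ 2 ≤ εθ ^ 2 := by
      have hεθ2 : εθ ^ 2 = R ^ 2 * (lam1 * εβ ^ 2) := by
        rw [hεθ]
        have : Real.sqrt lam1 ^ 2 = lam1 := Real.sq_sqrt hlam1pos.le
        nlinarith [this]
      rw [hεθ2]
      calc (x i ⬝ᵥ d) ^ 2 ≤ (∑ j, (x i j) ^ 2) * (∑ j, (d j) ^ 2) := hcs
        _ ≤ R ^ 2 * (lam1 * εβ ^ 2) := by
            have h0 : 0 ≤ ∑ j, (x i j) ^ 2 := by positivity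
            have h1 : 0 ≤ ∑ j, (d j) ^ 2 := by positivity
            nlinarith
    rw [hsub, ← Real.sqrt_sq_eq_abs, ← Real.sqrt_sq hεθ0]
    exact Real.sqrt_le_sqrt hsq
  have hAB : ∀ i, (y i - πA i) ^ 2 ≤ Real.exp (2 * εθ) * (y i - πB i) ^ 2 := by
    intro i
    rw [hπA i, hπB i]
    exact brier_term_le (hθ i) (hy i)
  have hBA : ∀ i, (y i - πB i) ^ 2 ≤ Real.exp (2 * εθ) * (y i - πA i) ^ 2 := by
    intro i
    rw [hπA i, hπB i]
    exact brier_term_le (by rw [abs_sub_comm]; exact hθ i) (hy i)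
  have hsumAB : ∑ i, (y i - πA i) ^ 2 ≤ Real.exp (2 * εθ) * ∑ i, (y i - πB i) ^ 2 := by
    rw [Finset.mul_sum]
    exact Finset.sum_le_sum fun i _ => hAB i
  have hsumBA : ∑ i, (y i - πB i) ^ 2 ≤ Real.exp (2 * εθ) * ∑ i, (y i - πA i) ^ 2 := by
    rw [Finset.mul_sum]
    exact Finset.sum_le_sum fun i _ => hBA i
  have hc : (0:ℝ) ≤ 1 / (m : ℝ) := by positivity
  have hEE : Real.exp (-2 * εθ) * Real.exp (2 * εθ) = 1 := by
    rw [← Real.exp_add]; ring_nf; exact Real.exp_zero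
  have hEpos : 0 < Real.exp (-2 * εθ) := Real.exp_pos _
  constructor
  · have key : Real.exp (-2 * εθ) * ∑ i, (y i - πB i) ^ 2 ≤ ∑ i, (y i - πA i) ^ 2 := by
      have := mul_le_mul_of_nonneg_left hsumBA hEpos.le
      calc Real.exp (-2 * εθ) * ∑ i, (y i - πB i) ^ 2
          ≤ Real.exp (-2 * εθ) * (Real.exp (2 * εθ) * ∑ i, (y i - πA i) ^ 2) := this
        _ = ∑ i, (y i - πA i) ^ 2 := by rw [← mul_assoc, hEE, one_mul]
    calc Real.exp (-2 * εθ) * ((1 / (m : ℝ)) * ∑ i, (y i - πB i) ^ 2)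
        = (1 / (m : ℝ)) * (Real.exp (-2 * εθ) * ∑ i, (y i - πB i) ^ 2) := by ring
      _ ≤ (1 / (m : ℝ)) * ∑ i, (y i - πA i) ^ 2 := mul_le_mul_of_nonneg_left key hc
  · calc (1 / (m : ℝ)) * ∑ i, (y i - πA i) ^ 2
        ≤ (1 / (m : ℝ)) * (Real.exp (2 * εθ) * ∑ i, (y i - πB i) ^ 2) :=
          mul_le_mul_of_nonneg_left hsumAB hc
      _ = Real.exp (2 * εθ) * ((1 / (m : ℝ)) * ∑ i, (y i - πB i) ^ 2) := by ring
end
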